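/- arXiv:1910.07674 — 2 statements merged into one kernel-verified Lean document; each statement's English description precedes it below -/
import Mathlib

section
/- Let q ≥ 2 be a fixed integer, β = 10·log(e·q), αmin > 0 and αi ≤ 1 constants, and k = k(n) = 10·log n / log log n. Then the function f(n) = (e·log n)^(n/log n) · ((e·log n)/β)^(β·n/log n) · ((e·β·αi)/(k·αmin))^(k·n/log n) tends to 0 as n → ∞. -/
open Real Filter

private lemma log_div_self_tendsto : Tendsto (fun x : ℝ => Real.log x / x) atTop (nhds 0) :=
  Real.isLittleO_log_id_atTop.tendsto_div_nhds_zero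

private lemma loglog_div_log_tendsto :
    Tendsto (fun x : ℝ => Real.log (Real.log x) / Real.log x) atTop (nhds 0) :=
  log_div_self_tendsto.comp Real.tendsto_log_atTop

private lemma S_tendsto (β αmin αi : ℝ) (hβ : 0 < β) (hαmin : 0 < αmin) (hαi : 0 < αi) :
    Tendsto (fun x : ℝ =>
      (Real.log (Real.exp 1 * x) + β * Real.log ((Real.exp 1 * x) / β) +
        (10 * x / Real.log x) *
          Real.log ((Real.exp 1 * β * αi) / ((10 * x / Real.log x) * αmin))) / x)
      atTop (nhds (-10)) := by
  set c : ℝ := Real.log (Real.exp 1 * β * αi) - Real.log 10 - Real.log αmin with hc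
  have hG : Tendsto (fun x : ℝ =>
      (x⁻¹ + Real.log x / x) + β * ((1 - Real.log β) * x⁻¹ + Real.log x / x) +
      (10 * c) * (Real.log x)⁻¹ + 10 * (Real.log (Real.log x) / Real.log x) + (-10))
      atTop (nhds (-10)) := by
    have A := tendsto_inv_atTop_zero.add log_div_self_tendsto
    have B := (tendsto_inv_atTop_zero.const_mul (1 - Real.log β)).add log_div_self_tendsto
    have C := (tendsto_inv_atTop_zero.comp Real.tendsto_log_atTop).const_mul (10 * c)
    have D := loglog_div_log_tendsto.const_mul 10
    have := (((A.add (B.const_mul β)).add C).add D).add_const (-10)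
    simpa using this
  refine hG.congr' ?_
  filter_upwards [eventually_ge_atTop (Real.exp 1)] with x hx
  have hx1 : (1 : ℝ) < x := by
    have := Real.add_one_le_exp 1; linarith
  have hx0 : 0 < x := by linarith
  have hlx : 0 < Real.log x := Real.log_pos hx1
  have hxne : x ≠ 0 := ne_of_gt hx0
  have hlne : Real.log x ≠ 0 := ne_of_gt hlx
  have h1 : Real.log (Real.exp 1 * x) = 1 + Real.log x := by
    rw [Real.log_mul (Real.exp_ne_zero 1) hxne, Real.log_exp]
  have h2 : Real.log ((Real.exp 1 * x) / β) = 1 + Real.log x - Real.log β := by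
    rw [Real.log_div (by positivity) (ne_of_gt hβ), h1]
  have hk : (0:ℝ) < 10 * x / Real.log x := by positivity
  have h3 : Real.log ((Real.exp 1 * β * αi) / ((10 * x / Real.log x) * αmin))
      = c - Real.log x + Real.log (Real.log x) := by
    rw [Real.log_div (by positivity) (by positivity),
        Real.log_mul (ne_of_gt hk) (ne_of_gt hαmin),
        Real.log_div (by positivity) hlne,
        Real.log_mul (by norm_num) hxne, hc]
    ring
  rw [h1, h2, h3]
  field_simp
  ring

/-- Lemma 2 bound: with `β = 10·log(e·q)` and `k(n) = 10·log n / log log n`, the function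
`(e·log n)^(n/log n) · ((e·log n)/β)^(β n/log n) · ((e·β·αi)/(k·αmin))^(k·n/log n)`
tends to `0`. -/
theorem stmt_2 (q : ℕ) (hq : 2 ≤ q) (β αmin αi : ℝ)
    (hβ : β = 10 * Real.log (Real.exp 1 * q))
    (hαmin : 0 < αmin) (hαi0 : 0 < αi) (hαi1 : αi ≤ 1) :
    Tendsto (fun n : ℕ =>
      (Real.exp 1 * Real.log n) ^ ((n : ℝ) / Real.log n) *
      ((Real.exp 1 * Real.log n) / β) ^ (β * n / Real.log n) *
      ((Real.exp 1 * β * αi) / ((10 * Real.log n / Real.log (Real.log n)) * αmin)) ^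
        ((10 * Real.log n / Real.log (Real.log n)) * n / Real.log n))
      atTop (nhds 0) := by
  have hβpos : 0 < β := by
    rw [hβ]
    have hq1 : (1:ℝ) ≤ (q:ℝ) := by exact_mod_cast Nat.one_le_of_lt hq
    have he : (2:ℝ) ≤ Real.exp 1 := by
      have := Real.add_one_le_exp 1; linarith
    have : (1:ℝ) < Real.exp 1 * q := by nlinarith
    have := Real.log_pos this
    linarith
  have hL : Tendsto (fun n : ℕ => Real.log n) atTop atTop :=
    Real.tendsto_log_atTop.comp tendsto_natCast_atTop_atTop
  -- S expression
  set S : ℝ → ℝ := fun x =>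
    Real.log (Real.exp 1 * x) + β * Real.log ((Real.exp 1 * x) / β) +
      (10 * x / Real.log x) *
        Real.log ((Real.exp 1 * β * αi) / ((10 * x / Real.log x) * αmin)) with hS
  have hSt : Tendsto (fun n : ℕ => S (Real.log n) / Real.log n) atTop (nhds (-10)) :=
    (S_tendsto β αmin αi hβpos hαmin hαi0).comp hL
  have hSle : ∀ᶠ n : ℕ in atTop, S (Real.log n) / Real.log n ≤ -1 :=
    hSt.eventually (eventually_le_nhds (by norm_num))
  -- the exponent function
  have hElim : Tendsto (fun n : ℕ => ((n : ℝ) / Real.log n) * S (Real.log n)) atTop atBot := by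
    refine tendsto_atBot_mono' atTop ?_ (tendsto_neg_atBot_iff.mpr tendsto_natCast_atTop_atTop)
    filter_upwards [hSle, hL.eventually_ge_atTop 1] with n h1 h2
    have hlpos : (0:ℝ) < Real.log n := lt_of_lt_of_le one_pos h2
    have hSn : S (Real.log n) ≤ -Real.log n := by
      have := (div_le_iff₀ hlpos).mp h1
      linarith
    have hnn : (0:ℝ) ≤ (n:ℝ) / Real.log n := by positivity
    calc ((n : ℝ) / Real.log n) * S (Real.log n)
        ≤ ((n : ℝ) / Real.log n) * (-Real.log n) := by
          exact mul_le_mul_of_nonneg_left hSn hnn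
      _ = -(n:ℝ) := by field_simp
  refine (Real.tendsto_exp_atBot.comp hElim).congr' ?_
  filter_upwards [hL.eventually_gt_atTop 1] with n hl1
  have hl0 : (0:ℝ) < Real.log n := lt_trans one_pos hl1
  have hll : (0:ℝ) < Real.log (Real.log n) := Real.log_pos hl1
  have hb1 : (0:ℝ) < Real.exp 1 * Real.log n := by positivity
  have hb2 : (0:ℝ) < (Real.exp 1 * Real.log n) / β := by positivity
  have hb3 : (0:ℝ) < (Real.exp 1 * β * αi) /
      ((10 * Real.log n / Real.log (Real.log n)) * αmin) := by positivity
  simp only [Function.comp]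
  rw [Real.rpow_def_of_pos hb1, Real.rpow_def_of_pos hb2, Real.rpow_def_of_pos hb3,
    ← Real.exp_add, ← Real.exp_add]
  congr 1
  simp only [hS]
  ring
end

section
/- Fix a constant δ > 0 and constants 0 < αmin ≤ αi ≤ 1 with e³·αi² / (4·δ·αmin²) given, and let γ = δ·αmin²/8. Then the sum over s from 1 to n₀ = γ·n/log n of (s·log n / n)^(δ·s·log n − s) · (e·log n)^s · (e³·αi²/(4·δ·αmin²))^(δ·s·log n) tends to 0 as n → ∞, provided δ·log n > 2 eventually. -/
open Real Filter

/-- Lemma 4 bound: with `γ = δ·αmin²/8` and `n₀ = γ·n/log n`, the sum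
`∑_{s=1}^{n₀} (s·log n / n)^(δ s log n − s) · (e log n)^s · (e³αi²/(4δαmin²))^(δ s log n)`
tends to `0` as `n → ∞`. -/
theorem stmt_4 (δ αmin αi γ : ℝ) (hδ : 0 < δ)
    (hαmin : 0 < αmin) (hle : αmin ≤ αi) (hαi : αi ≤ 1)
    (hγ : γ = δ * αmin ^ 2 / 8) :
    Tendsto (fun n : ℕ =>
      ∑ s ∈ Finset.Icc 1 ⌊γ * n / Real.log n⌋₊,
        ((s : ℝ) * Real.log n / n) ^ (δ * s * Real.log n - s) *
        (Real.exp 1 * Real.log n) ^ (s : ℝ) *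
        ((Real.exp 1 ^ 3 * αi ^ 2) / (4 * δ * αmin ^ 2)) ^ (δ * s * Real.log n))
      atTop (nhds 0) := by
  set C : ℝ := (Real.exp 1 ^ 3 * αi ^ 2) / (4 * δ * αmin ^ 2) with hC
  set q : ℝ := Real.exp 1 ^ 3 / 32 with hq
  have hαi0 : 0 < αi := lt_of_lt_of_le hαmin hle
  have hCpos : 0 < C := by positivity
  have hq0 : 0 < q := by positivity
  have hq1 : q < 1 := by
    have h := Real.exp_one_lt_d9
    have h3 : Real.exp 1 ^ 3 < 2.7182818286 ^ 3 :=
      pow_lt_pow_left₀ h (Real.exp_pos 1).le (by norm_num)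
    rw [hq, div_lt_one (by norm_num)]
    nlinarith
  have hγC : γ * C ≤ q := by
    have hγCeq : γ * C = Real.exp 1 ^ 3 * αi ^ 2 / 32 := by
      rw [hγ, hC]; field_simp; ring
    rw [hγCeq, hq]
    have : αi ^ 2 ≤ 1 := by nlinarith
    have he : (0:ℝ) < Real.exp 1 ^ 3 := by positivity
    rw [div_le_div_iff₀ (by norm_num) (by norm_num)]
    nlinarith
  -- the dominating function
  set r : ℕ → ℝ := fun n => q ^ (δ * Real.log n - 1) * (C * (Real.exp 1 * Real.log n)) with hr
  have hlogq : Real.log q < 0 := Real.log_neg hq0 hq1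
  -- r → 0
  have hrt : Tendsto r atTop (nhds 0) := by
    have hc : 0 < -(δ * Real.log q) := by nlinarith
    have h1 : Tendsto (fun x : ℝ => Real.log x / x ^ (-(δ * Real.log q))) atTop (nhds 0) :=
      (isLittleO_log_rpow_atTop hc).tendsto_div_nhds_zero
    have h2 : Tendsto (fun n : ℕ => Real.log n / (n:ℝ) ^ (-(δ * Real.log q))) atTop (nhds 0) :=
      h1.comp tendsto_natCast_atTop_atTop
    have h3 : Tendsto (fun n : ℕ => (q⁻¹ * (C * Real.exp 1)) *
        (Real.log n / (n:ℝ) ^ (-(δ * Real.log q)))) atTop (nhds 0) := by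
      simpa using h2.const_mul (q⁻¹ * (C * Real.exp 1))
    apply h3.congr'
    filter_upwards [eventually_ge_atTop 1] with n hn
    have hn0 : (0:ℝ) < (n:ℝ) := by exact_mod_cast hn
    have e1 : q ^ (δ * Real.log n - 1) = q⁻¹ * (n:ℝ) ^ (δ * Real.log q) := by
      rw [Real.rpow_def_of_pos hq0, Real.rpow_def_of_pos hn0]
      rw [show Real.log q * (δ * Real.log n - 1) =
        Real.log n * (δ * Real.log q) + (- Real.log q) by ring, Real.exp_add,
        Real.exp_neg, Real.exp_log hq0]
      ring
    have e2 : (n:ℝ) ^ (δ * Real.log q) = ((n:ℝ) ^ (-(δ * Real.log q)))⁻¹ := by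
      rw [← Real.rpow_neg hn0.le]; ring_nf
    rw [hr]
    simp only [e1, e2]
    field_simp
  -- squeeze
  have hδlog : Tendsto (fun n : ℕ => δ * Real.log n) atTop atTop :=
    (Real.tendsto_log_atTop.comp tendsto_natCast_atTop_atTop).const_mul_atTop hδ
  have h2r : Tendsto (fun n => 2 * r n) atTop (nhds 0) := by
    simpa using hrt.const_mul 2
  apply squeeze_zero' ?_ ?_ h2r
  · -- nonneg
    filter_upwards [eventually_ge_atTop 1] with n hn
    apply Finset.sum_nonneg
    intro s hs
    have hn0 : (0:ℝ) ≤ (n:ℝ) := by positivity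
    have : (0:ℝ) ≤ (s : ℝ) * Real.log n / n := by
      rcases Finset.mem_Icc.mp hs with ⟨hs1, hs2⟩
      by_cases hlog : 0 ≤ Real.log n
      · positivity
      · -- if log n < 0 then floor (γ n / log n) = 0 (since γ n / log n ≤ 0), contradiction with s ≥ 1
        exfalso
        have hγ0 : 0 ≤ γ := by rw [hγ]; positivity
        have : γ * n / Real.log n ≤ 0 := div_nonpos_of_nonneg_of_nonpos (by positivity) (not_le.mp hlog).le
        have : ⌊γ * n / Real.log n⌋₊ = 0 := Nat.floor_eq_zero.mpr (lt_of_le_of_lt this one_pos)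
        omega
    have h2 : (0:ℝ) ≤ Real.exp 1 * Real.log n := by
      by_cases hlog : 0 ≤ Real.log n
      · positivity
      · rcases Finset.mem_Icc.mp hs with ⟨hs1, hs2⟩
        exfalso
        have hγ0 : 0 ≤ γ := by rw [hγ]; positivity
        have : γ * n / Real.log n ≤ 0 := div_nonpos_of_nonneg_of_nonpos (by positivity) (not_le.mp hlog).le
        have : ⌊γ * n / Real.log n⌋₊ = 0 := Nat.floor_eq_zero.mpr (lt_of_le_of_lt this one_pos)
        omega
    positivity
  · -- main bound
    filter_upwards [eventually_ge_atTop 2, hδlog.eventually_ge_atTop 2,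
      hrt.eventually (eventually_le_nhds (by norm_num : (0:ℝ) < 1/2)),
      hrt.eventually (eventually_ge_nhds (by norm_num : (-1:ℝ)/2 < 0))] with n hn2 hδ2 hr12 hrneg
    have hrhalf : r n ≤ 1/2 := hr12
    have hlogn : 0 < Real.log n := Real.log_pos (by exact_mod_cast hn2)
    have hn0 : (0:ℝ) < (n:ℝ) := by positivity
    have hrnn : 0 ≤ r n := by
      rw [hr]
      positivity
    calc (∑ s ∈ Finset.Icc 1 ⌊γ * n / Real.log n⌋₊,
        ((s : ℝ) * Real.log n / n) ^ (δ * s * Real.log n - s) *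
        (Real.exp 1 * Real.log n) ^ (s : ℝ) * C ^ (δ * s * Real.log n))
        ≤ ∑ s ∈ Finset.Icc 1 ⌊γ * n / Real.log n⌋₊, r n ^ s := by
          apply Finset.sum_le_sum
          intro s hs
          rcases Finset.mem_Icc.mp hs with ⟨hs1, hs2⟩
          have hs0 : (0:ℝ) < (s:ℝ) := by exact_mod_cast hs1
          set A : ℝ := (s : ℝ) * Real.log n / n with hA
          have hA0 : 0 < A := by positivity
          -- A ≤ γ
          have hsle : (s:ℝ) ≤ γ * n / Real.log n := by
            have hx : (0:ℝ) ≤ γ * n / Real.log n := by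
              rw [hγ]; positivity
            exact (Nat.le_floor_iff hx).mp hs2
          have hAγ : A ≤ γ := by
            rw [hA, div_le_iff₀ hn0]
            calc (s:ℝ) * Real.log n ≤ (γ * n / Real.log n) * Real.log n :=
              mul_le_mul_of_nonneg_right hsle hlogn.le
            _ = γ * n := by field_simp
          have hACq : A * C ≤ q := le_trans (mul_le_mul_of_nonneg_right hAγ hCpos.le) hγC
          -- rewrite term as pow s
          have e1 : A ^ (δ * s * Real.log n - s) = (A ^ (δ * Real.log n - 1)) ^ (s:ℕ) := by
            rw [show δ * s * Real.log n - s = (δ * Real.log n - 1) * (s:ℕ) by push_cast; ring,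
              Real.rpow_mul hA0.le, Real.rpow_natCast]
          have e2 : C ^ (δ * (s:ℝ) * Real.log n) = (C ^ (δ * Real.log n)) ^ (s:ℕ) := by
            rw [show δ * (s:ℝ) * Real.log n = (δ * Real.log n) * (s:ℕ) by push_cast; ring,
              Real.rpow_mul hCpos.le, Real.rpow_natCast]
          have e3 : (Real.exp 1 * Real.log n) ^ ((s:ℕ):ℝ) = (Real.exp 1 * Real.log n) ^ (s:ℕ) :=
            Real.rpow_natCast _ s
          rw [e1, e2, e3, ← mul_pow, ← mul_pow]
          apply pow_le_pow_left₀ (by positivity)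
          -- base ≤ r n
          have hd1 : (1:ℝ) ≤ δ * Real.log n - 1 := by linarith
          have hsplit : C ^ (δ * Real.log n) = C ^ (δ * Real.log n - 1) * C := by
            rw [← Real.rpow_add_one hCpos.ne' (δ * Real.log n - 1)]
            ring_nf
          rw [hsplit]
          calc A ^ (δ * Real.log n - 1) * (Real.exp 1 * Real.log n) *
              (C ^ (δ * Real.log n - 1) * C)
              = (A * C) ^ (δ * Real.log n - 1) * (C * (Real.exp 1 * Real.log n)) := by
                rw [Real.mul_rpow hA0.le hCpos.le]; ring
            _ ≤ q ^ (δ * Real.log n - 1) * (C * (Real.exp 1 * Real.log n)) := by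
                apply mul_le_mul_of_nonneg_right
                · exact Real.rpow_le_rpow (by positivity) hACq (by linarith)
                · positivity
            _ = r n := rfl
      _ ≤ r n / (1 - r n) := by
          rw [← Finset.Ico_add_one_right_eq_Icc]
          have := geom_sum_Ico_le_of_lt_one hrnn (lt_of_le_of_lt hrhalf (by norm_num))
            (m := 1) (n := ⌊γ * n / Real.log n⌋₊ + 1)
          simpa using this
      _ ≤ 2 * r n := by
          rw [div_le_iff₀ (by linarith)]
          nlinarith
end
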